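/- arXiv:2203.02674 — 4 statements merged into one kernel-verified Lean document; each statement's English description precedes it below -/
import Mathlib

section
/- Let n be a positive integer and let Z₃, Ω₁, Ω₂, Ω₃ be n×n complex matrices such that Z₃ is invertible and Z₃ = Ω₃ᴴ Ω₃. Suppose Z₂ is an n×n complex matrix satisfying Z₂ = (Z₃⁻¹ Ω₂ᴴ Z₃) Ω₂, suppose the product Z₃ Z₂ is invertible, and suppose Z₁ is an n×n complex matrix satisfying Z₁ = ((Z₃ Z₂)⁻¹ Ω₁ᴴ (Z₃ Z₂)) Ω₁. Then the physical metric Θ₃ := Z₃ Z₂ Z₁ satisfies Θ₃ = (Ω₃ Ω₂ Ω₁)ᴴ (Ω₃ Ω₂ Ω₁). -/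
open Matrix

section

variable {m R : Type*} [Fintype m] [CommRing R] [StarRing R]

theorem mul_metricAdjoint_mul [DecidableEq m] {A : Matrix m m R} (hA : IsUnit A)
    (Λ : Matrix m m R) :
    A * (A⁻¹ * Λᴴ * A * Λ) = Λᴴ * A * Λ := by
  simp only [Matrix.mul_assoc]
  exact mul_nonsing_inv_cancel_left A _ ((isUnit_iff_isUnit_det A).mp hA)

theorem conjTranspose_mul_gram_mul {p q : Type*} [Fintype p] (Ω : Matrix p m R)
    (Λ : Matrix m q R) :
    Λᴴ * (Ωᴴ * Ω) * Λ = (Ω * Λ)ᴴ * (Ω * Λ) := by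
  simp only [conjTranspose_mul, Matrix.mul_assoc]

end

theorem dyson_composition_K4_general (n : ℕ)
    (Z₁ Z₂ Z₃ Ω₁ Ω₂ Ω₃ : Matrix (Fin n) (Fin n) ℂ)
    (hZ₃inv : IsUnit Z₃)
    (hZ₃ : Z₃ = Ω₃ᴴ * Ω₃)
    (hZ₂ : Z₂ = (Z₃⁻¹ * Ω₂ᴴ * Z₃) * Ω₂)
    (hZ₃Z₂inv : IsUnit (Z₃ * Z₂))
    (hZ₁ : Z₁ = ((Z₃ * Z₂)⁻¹ * Ω₁ᴴ * (Z₃ * Z₂)) * Ω₁) :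
    Z₃ * Z₂ * Z₁ = (Ω₃ * Ω₂ * Ω₁)ᴴ * (Ω₃ * Ω₂ * Ω₁) := by
  have hZ₃Z₂ : Z₃ * Z₂ = (Ω₃ * Ω₂)ᴴ * (Ω₃ * Ω₂) := by
    rw [hZ₂, mul_metricAdjoint_mul hZ₃inv, hZ₃, conjTranspose_mul_gram_mul]
  rw [hZ₁, mul_metricAdjoint_mul hZ₃Z₂inv, hZ₃Z₂, conjTranspose_mul_gram_mul]

/-- K=4 composition law for generalized Dyson maps (Lemma 2). -/
theorem dyson_composition_K4 (n : ℕ) (hn : 0 < n)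
    (Z₁ Z₂ Z₃ Ω₁ Ω₂ Ω₃ : Matrix (Fin n) (Fin n) ℂ)
    (hZ₃inv : IsUnit Z₃)
    (hZ₃ : Z₃ = Ω₃ᴴ * Ω₃)
    (hZ₂ : Z₂ = (Z₃⁻¹ * Ω₂ᴴ * Z₃) * Ω₂)
    (hZ₃Z₂inv : IsUnit (Z₃ * Z₂))
    (hZ₁ : Z₁ = ((Z₃ * Z₂)⁻¹ * Ω₁ᴴ * (Z₃ * Z₂)) * Ω₁) :
    Z₃ * Z₂ * Z₁ = (Ω₃ * Ω₂ * Ω₁)ᴴ * (Ω₃ * Ω₂ * Ω₁) :=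
  dyson_composition_K4_general n Z₁ Z₂ Z₃ Ω₁ Ω₂ Ω₃ hZ₃inv hZ₃ hZ₂ hZ₃Z₂inv hZ₁
end

section
/- Let K ≥ 2 and let Z₁, …, Z_{K−1} and Ω₁, …, Ω_{K−1} be n×n complex matrices. For each j with 1 ≤ j ≤ K−1 define Θ_j := Z_{K−1} Z_{K−2} ⋯ Z_{j+1} (the product taken in decreasing order of indices, with Θ_{K−1} := the identity matrix). Assume each Θ_j is invertible and that each Z_j admits the factorization Z_j = (Θ_j⁻¹ Ω_jᴴ Θ_j) Ω_j. Then the physical metric Θ := Z_{K−1} Z_{K−2} ⋯ Z₂ Z₁ satisfies Θ = (Ω_{K−1} ⋯ Ω₂ Ω₁)ᴴ (Ω_{K−1} ⋯ Ω₂ Ω₁). -/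
open Matrix

/-- The descending product `Z_{K-1} * Z_{K-2} * ⋯ * Z_{k+1}`
(the identity matrix when `k ≥ K-1`). -/
noncomputable def descProd {n : ℕ} (Z : ℕ → Matrix (Fin n) (Fin n) ℂ) (K k : ℕ) :
    Matrix (Fin n) (Fin n) ℂ :=
  ((List.range (K - 1 - k)).map (fun i => Z (K - 1 - i))).prod

/-! Each factorization `Z_j = (Θ_j⁻¹ Ω_jᴴ Θ_j) Ω_j` turns `Θ_{j-1} = Θ_j Z_j` into
`Ω_jᴴ Θ_j Ω_j`, so if `Θ_j = W_jᴴ W_j` with `W_j = Ω_{K-1} ⋯ Ω_{j+1}`, then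
`Θ_{j-1} = (W_j Ω_j)ᴴ (W_j Ω_j)`. A descending induction from `Θ_{K-1} = 1` gives the claim. -/

theorem Matrix.mul_nonsing_inv_mul_conjTranspose_mul_mul {m α : Type*} [Fintype m]
    [DecidableEq m] [CommRing α] [StarRing α] {A : Matrix m m α} (hA : IsUnit A)
    (Λ : Matrix m m α) : A * (A⁻¹ * Λᴴ * A * Λ) = Λᴴ * A * Λ := by
  rw [Matrix.mul_assoc A⁻¹, Matrix.mul_assoc A⁻¹,
    A.mul_nonsing_inv_cancel_left (Λᴴ * A * Λ) ((isUnit_iff_isUnit_det A).mp hA),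
    Matrix.mul_assoc]

section descProd

variable {n : ℕ} (W : ℕ → Matrix (Fin n) (Fin n) ℂ) (K : ℕ)

theorem descProd_of_le {k : ℕ} (hk : K - 1 ≤ k) : descProd W K k = 1 := by
  simp [descProd, Nat.sub_eq_zero_of_le hk]

theorem descProd_eq_mul {k : ℕ} (hk : k < K - 1) :
    descProd W K k = descProd W K (k + 1) * W (k + 1) := by
  have hlen : K - 1 - k = (K - 1 - (k + 1)) + 1 := by omega
  have hlast : K - 1 - (K - 1 - (k + 1)) = k + 1 := by omega
  simp only [descProd, hlen, List.range_succ, List.map_append, List.prod_append, hlast,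
    List.map_cons, List.map_nil, List.prod_cons, List.prod_nil, Matrix.mul_one]

end descProd

theorem descProd_eq_conjTranspose_mul_self {n K : ℕ} {Z Ω : ℕ → Matrix (Fin n) (Fin n) ℂ}
    (hinv : ∀ j, 1 ≤ j → j ≤ K - 1 → IsUnit (descProd Z K j))
    (hfac : ∀ j, 1 ≤ j → j ≤ K - 1 →
      Z j = ((descProd Z K j)⁻¹ * (Ω j)ᴴ * (descProd Z K j)) * Ω j)
    {k : ℕ} (hk : k ≤ K - 1) :
    descProd Z K k = (descProd Ω K k)ᴴ * descProd Ω K k := by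
  induction hk using Nat.decreasingInduction with
  | self => simp [descProd_of_le]
  | of_succ k hk ih =>
    rw [descProd_eq_mul Z K hk, descProd_eq_mul Ω K hk, hfac (k + 1) (by omega) hk,
      mul_nonsing_inv_mul_conjTranspose_mul_mul (hinv (k + 1) (by omega) hk), ih,
      conjTranspose_mul]
    simp only [Matrix.mul_assoc]

theorem dyson_composition_generalK_general (n K : ℕ)
    (Z Ω : ℕ → Matrix (Fin n) (Fin n) ℂ)
    (hinv : ∀ j, 1 ≤ j → j ≤ K - 1 → IsUnit (descProd Z K j))
    (hfac : ∀ j, 1 ≤ j → j ≤ K - 1 →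
      Z j = ((descProd Z K j)⁻¹ * (Ω j)ᴴ * (descProd Z K j)) * Ω j) :
    descProd Z K 0 = (descProd Ω K 0)ᴴ * (descProd Ω K 0) :=
  descProd_eq_conjTranspose_mul_self hinv hfac (Nat.zero_le _)

/-- General-K composition law for generalized Dyson maps (Theorem 1). -/
theorem dyson_composition_generalK (n K : ℕ) (hK : 2 ≤ K)
    (Z Ω : ℕ → Matrix (Fin n) (Fin n) ℂ)
    (hinv : ∀ j, 1 ≤ j → j ≤ K - 1 → IsUnit (descProd Z K j))
    (hfac : ∀ j, 1 ≤ j → j ≤ K - 1 →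
      Z j = ((descProd Z K j)⁻¹ * (Ω j)ᴴ * (descProd Z K j)) * Ω j) :
    descProd Z K 0 = (descProd Ω K 0)ᴴ * (descProd Ω K 0) :=
  dyson_composition_generalK_general n K Z Ω hinv hfac
end

section
/- Let K ≥ 2 and let Ω₁, …, Ω_{K−1} be invertible n×n complex matrices. Then there exist n×n complex matrices Z₁, …, Z_{K−1} such that, with Θ_j := Z_{K−1} ⋯ Z_{j+1} (and Θ_{K−1} the identity), every Θ_j is invertible, every Z_j satisfies Z_j = (Θ_j⁻¹ Ω_jᴴ Θ_j) Ω_j, and Z_{K−1} ⋯ Z₁ = (Ω_{K−1} ⋯ Ω₁)ᴴ (Ω_{K−1} ⋯ Ω₁). -/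
open Matrix

/-!
Put `W k := Ω_{K-1} ⋯ Ω_{k+1}` and let `G k := (W k)ᴴ * W k` be its Gram matrix, so that
`G (K-1) = 1`, `G 0` is the target metric and `G (j-1) = (Ω j)ᴴ * G j * Ω j`.
The choice `Z j := (G j)⁻¹ * G (j-1)` makes the products `Z_{K-1} ⋯ Z_{j+1}` telescope to `G j`,
and then `Z j = (G j)⁻¹ * (Ω j)ᴴ * G j * Ω j` is exactly the required factorization.
-/

namespace descProd

variable {n : ℕ} (M : ℕ → Matrix (Fin n) (Fin n) ℂ) {K k : ℕ}

theorem of_sub_one_le (hk : K - 1 ≤ k) : descProd M K k = 1 := by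
  simp [descProd, Nat.sub_eq_zero_of_le hk]

theorem eq_mul_succ (hk : k + 1 ≤ K - 1) : descProd M K k = descProd M K (k + 1) * M (k + 1) := by
  have hlen : K - 1 - k = (K - 1 - (k + 1)) + 1 := by omega
  have hlast : K - 1 - (K - 1 - (k + 1)) = k + 1 := by omega
  rw [descProd, hlen, List.range_succ, List.map_append, List.prod_append]
  simp [descProd, hlast]

theorem isUnit (hM : ∀ j, k < j → j ≤ K - 1 → IsUnit (M j)) : IsUnit (descProd M K k) := by
  refine List.prod_isUnit fun m hm => ?_
  obtain ⟨i, hi, rfl⟩ := List.mem_map.mp hm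
  exact hM _ (by simp at hi; omega) (by omega)

theorem gram_eq_succ (hk : k + 1 ≤ K - 1) :
    (descProd M K k)ᴴ * descProd M K k
      = (M (k + 1))ᴴ * ((descProd M K (k + 1))ᴴ * descProd M K (k + 1)) * M (k + 1) := by
  simp only [eq_mul_succ M hk, conjTranspose_mul, mul_assoc]

theorem telescope (G : ℕ → Matrix (Fin n) (Fin n) ℂ) (hG : ∀ j, IsUnit (G j)) (hk : k ≤ K - 1) :
    descProd (fun j => (G j)⁻¹ * G (j - 1)) K k = (G (K - 1))⁻¹ * G k := by
  induction hk using Nat.decreasingInduction with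
  | self =>
    rw [of_sub_one_le _ le_rfl, nonsing_inv_mul _ ((isUnit_iff_isUnit_det _).mp (hG _))]
  | of_succ k hk ih =>
    rw [eq_mul_succ _ hk, ih, Nat.add_sub_cancel, mul_assoc,
      mul_nonsing_inv_cancel_left _ _ ((isUnit_iff_isUnit_det _).mp (hG _))]

end descProd

theorem dyson_composition_existence_general (n K : ℕ)
    (Ω : ℕ → Matrix (Fin n) (Fin n) ℂ)
    (hΩ : ∀ j, 1 ≤ j → j ≤ K - 1 → IsUnit (Ω j)) :
    ∃ Z : ℕ → Matrix (Fin n) (Fin n) ℂ,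
      (∀ j, 1 ≤ j → j ≤ K - 1 →
        IsUnit (descProd Z K j) ∧
        Z j = ((descProd Z K j)⁻¹ * (Ω j)ᴴ * (descProd Z K j)) * Ω j) ∧
      descProd Z K 0 = (descProd Ω K 0)ᴴ * (descProd Ω K 0) := by
  set G : ℕ → Matrix (Fin n) (Fin n) ℂ := fun k => (descProd Ω K k)ᴴ * descProd Ω K k
  have hG : ∀ k, IsUnit (G k) := fun k =>
    have hW := descProd.isUnit Ω fun j hkj hjK => hΩ j (by omega) hjK
    ((isUnit_conjTranspose _).mpr hW).mul hW
  have hΘ : ∀ k ≤ K - 1, descProd (fun j => (G j)⁻¹ * G (j - 1)) K k = G k := fun k hk => by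
    rw [descProd.telescope G hG hk]
    simp [G, descProd.of_sub_one_le Ω le_rfl]
  refine ⟨fun j => (G j)⁻¹ * G (j - 1), fun j hj hjK => ⟨hΘ j hjK ▸ hG j, ?_⟩, hΘ 0 (Nat.zero_le _)⟩
  have hpred := descProd.gram_eq_succ Ω (k := j - 1) (K := K) (by omega)
  rw [Nat.sub_add_cancel hj] at hpred
  simp only [hΘ j hjK, G, hpred, mul_assoc]

/-- Existence direction of the equivalence of Theorem 1: any family of invertible
Dyson maps Ω₁, …, Ω_{K-1} arises from factorized operators Z₁, …, Z_{K-1}. -/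
theorem dyson_composition_existence (n K : ℕ) (hK : 2 ≤ K)
    (Ω : ℕ → Matrix (Fin n) (Fin n) ℂ)
    (hΩ : ∀ j, 1 ≤ j → j ≤ K - 1 → IsUnit (Ω j)) :
    ∃ Z : ℕ → Matrix (Fin n) (Fin n) ℂ,
      (∀ j, 1 ≤ j → j ≤ K - 1 →
        IsUnit (descProd Z K j) ∧
        Z j = ((descProd Z K j)⁻¹ * (Ω j)ᴴ * (descProd Z K j)) * Ω j) ∧
      descProd Z K 0 = (descProd Ω K 0)ᴴ * (descProd Ω K 0) :=
  dyson_composition_existence_general n K Ω hΩ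
end

section
/- Let K ≥ 2 and let Z₁, …, Z_{K−1} be n×n complex matrices. For 0 ≤ k ≤ K−1 define Θ_k := Z_{K−1} Z_{K−2} ⋯ Z_{k+1} (product in decreasing order of indices, with Θ_{K−1} the identity), and assume that for each k with 1 ≤ k ≤ K−1 the pseudo-Hermiticity relation Z_kᴴ Θ_k = Θ_k Z_k holds. Then for every m with 1 ≤ m ≤ K−1 the product P_m := Z_m Z_{m−1} ⋯ Z₁ is quasi-Hermitian with respect to the physical metric Θ := Θ₀ = Z_{K−1} ⋯ Z₁, i.e. (Z_m ⋯ Z₁)ᴴ (Z_{K−1} ⋯ Z₁) = (Z_{K−1} ⋯ Z₁)(Z_m ⋯ Z₁). -/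
open Matrix

/-! The proof idea: writing `Θ_m = Z_{K-1} ⋯ Z_{m+1}` and `P_m = Z_m ⋯ Z₁`, the metric factors as
`Θ = Θ_m P_m`. Induction on `m` shows `P_mᴴ Θ_m = Θ_m P_m`, since `P_{m+1} = Z_{m+1} P_m`,
`Θ_m = Θ_{m+1} Z_{m+1}` and `Z_{m+1}ᴴ Θ_{m+1} = Θ_{m+1} Z_{m+1}`. Then
`P_mᴴ Θ = (Θ_m P_m) P_m = Θ P_m`. -/

section QuasiHermitian

variable {R : Type*} [Monoid R] [StarMul R]

def IsQuasiHermitian (θ a : R) : Prop :=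
  star a * θ = θ * a

theorem isQuasiHermitian_one (θ : R) : IsQuasiHermitian θ 1 := by
  simp [IsQuasiHermitian]

theorem IsQuasiHermitian.mul {θ z p : R} (hz : IsQuasiHermitian θ z)
    (hp : IsQuasiHermitian (θ * z) p) : IsQuasiHermitian θ (z * p) := by
  unfold IsQuasiHermitian at *
  rw [star_mul, mul_assoc, hz, hp, mul_assoc]

theorem IsQuasiHermitian.mul_right_self {θ p : R} (hp : IsQuasiHermitian θ p) :
    IsQuasiHermitian (θ * p) p := by
  unfold IsQuasiHermitian at *
  rw [← mul_assoc, hp]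

end QuasiHermitian

section descProd

variable {n : ℕ} (Z : ℕ → Matrix (Fin n) (Fin n) ℂ)

theorem descProd_succ_self (k : ℕ) : descProd Z (k + 1) k = 1 := by
  simp [descProd]

theorem descProd_eq_descProd_mul (K k : ℕ) (h : k + 1 ≤ K - 1) :
    descProd Z K k = descProd Z K (k + 1) * Z (k + 1) := by
  have hlen : K - 1 - k = K - 1 - (k + 1) + 1 := by omega
  have hlast : K - 1 - (K - 1 - (k + 1)) = k + 1 := by omega
  rw [descProd, hlen, List.range_succ, List.map_append, List.prod_append]
  simp [descProd, hlast]

theorem descProd_succ_eq_mul (m k : ℕ) (h : k ≤ m) :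
    descProd Z (m + 2) k = Z (m + 1) * descProd Z (m + 1) k := by
  have hlen : m + 2 - 1 - k = m - k + 1 := by omega
  rw [descProd, hlen, List.range_succ_eq_map]
  simp [descProd, Function.comp_def, Nat.add_sub_add_right]

theorem descProd_eq_descProd_mul_descProd (K k m : ℕ) (hkm : k ≤ m) (hm : m ≤ K - 1) :
    descProd Z K k = descProd Z K m * descProd Z (m + 1) k := by
  induction m, hkm using Nat.le_induction with
  | base => rw [descProd_succ_self, mul_one]
  | succ m hkm ih =>
    rw [ih (by omega), descProd_eq_descProd_mul Z K m (by omega),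
      descProd_succ_eq_mul Z m k hkm, mul_assoc]

theorem isQuasiHermitian_descProd {K : ℕ}
    (hpseudo : ∀ k, 1 ≤ k → k ≤ K - 1 →
      (Z k)ᴴ * descProd Z K k = descProd Z K k * Z k) :
    ∀ m ≤ K - 1, IsQuasiHermitian (descProd Z K m) (descProd Z (m + 1) 0) := by
  intro m
  induction m with
  | zero => intro; rw [descProd_succ_self]; exact isQuasiHermitian_one _
  | succ m ih =>
    intro hm
    have hP : IsQuasiHermitian (descProd Z K (m + 1) * Z (m + 1)) (descProd Z (m + 1) 0) := by
      rw [← descProd_eq_descProd_mul Z K m hm]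
      exact ih (by omega)
    rw [descProd_succ_eq_mul Z m 0 (Nat.zero_le m)]
    exact IsQuasiHermitian.mul (hpseudo (m + 1) (by omega) hm) hP

end descProd

theorem leftFactor_quasiHermitian_generalK_general (n K : ℕ)
    (Z : ℕ → Matrix (Fin n) (Fin n) ℂ)
    (hpseudo : ∀ k, 1 ≤ k → k ≤ K - 1 →
      (Z k)ᴴ * descProd Z K k = descProd Z K k * Z k) :
    ∀ m, 1 ≤ m → m ≤ K - 1 →
      (descProd Z (m + 1) 0)ᴴ * descProd Z K 0 =
        descProd Z K 0 * descProd Z (m + 1) 0 := by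
  intro m _ hm
  rw [descProd_eq_descProd_mul_descProd Z K 0 m (Nat.zero_le m) hm]
  exact (isQuasiHermitian_descProd Z hpseudo m hm).mul_right_self

/-- General-K observability: under the hierarchy of pseudo-Hermiticity relations
of Table 2, each left-factor product Z_m ⋯ Z₁ of the metric is quasi-Hermitian with
respect to the physical metric Θ = Z_{K-1} ⋯ Z₁. -/
theorem leftFactor_quasiHermitian_generalK (n K : ℕ) (hK : 2 ≤ K)
    (Z : ℕ → Matrix (Fin n) (Fin n) ℂ)
    (hpseudo : ∀ k, 1 ≤ k → k ≤ K - 1 →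
      (Z k)ᴴ * descProd Z K k = descProd Z K k * Z k) :
    ∀ m, 1 ≤ m → m ≤ K - 1 →
      (descProd Z (m + 1) 0)ᴴ * descProd Z K 0 =
        descProd Z K 0 * descProd Z (m + 1) 0 :=
  leftFactor_quasiHermitian_generalK_general n K Z hpseudo
end
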